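/- arXiv:1810.12048 — 2 statements merged into one kernel-verified Lean document; each statement's English description precedes it below -/
import Mathlib

section
/- For all nonnegative integers L and M and every complex number q with 0<|q|<1, the following identity holds: Σ_{m≥0, m≡L (mod 2)} q^{m²} · [3M choose m]_{q²} · [2M+(L−m)/2 choose 2M]_{q⁶} = Σ_{j∈ℤ} q^{3j²+2j} · T(L, M; j, j; q⁶), where the sum over j is finite since the refined q-trinomial coefficient vanishes for |j| large. -/
/-!
Both sides are the coefficient of `X ^ L` in a product of power series. By the `q`-binomial
theorem the left side is the coefficient in
`∏_{k<3M} (1 + q^(2k+1) X) / ∏_{k≤2M} (1 - q^(6k) X²)`.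
On the right, writing `j = s - r` with `r + s = L - n`, the sum becomes the coefficient in
`∏_{k<M} (1 + q^(6k+3) X) · G_{M,M}`, where
`G_{M₁,M₂} = ∑_{r,s} q^(3(s-r)² + 2(s-r)) [M₁+s, r]_{q⁶} [M₂+r, s]_{q⁶} X^(r+s)`.
The `q`-Pascal rule gives one first-order recurrence for `G` in each of `M₁` and `M₂`; together
they yield `G_{M,M} · ∏_{k≤2M} (1 - q^(6k) X²) = ∏_{k<M} (1 + q^(6k+1) X) (1 + q^(6k+5) X)`,
and sorting the odd exponents `2k+1` by their residue mod 6 finishes the proof.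
-/

open Finset

noncomputable section

/-- The finite q-Pochhammer symbol `(a;q)_n`. -/
def qPoch (a q : ℂ) (n : ℕ) : ℂ := ∏ k ∈ Finset.range n, (1 - a * q ^ k)

/-- The infinite q-Pochhammer symbol `(a;q)_∞`. -/
def qPochInf (a q : ℂ) : ℂ := ∏' k : ℕ, (1 - a * q ^ k)

/-- The Gaussian binomial coefficient `[N choose k]_q`, zero unless `0 ≤ k ≤ N`. -/
def qBinom (q : ℂ) (N k : ℤ) : ℂ :=
  if 0 ≤ k ∧ k ≤ N then qPoch q q N.toNat / (qPoch q q k.toNat * qPoch q q (N - k).toNat)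
  else 0

/-- `1/(a;q)_k`, with the convention that it is `0` for `k < 0`. -/
def invPoch (a q : ℂ) (k : ℤ) : ℂ := if 0 ≤ k then (qPoch a q k.toNat)⁻¹ else 0

/-- Warnaar's refined q-trinomial coefficient `T(L, M; a, b; q)`, where `z` is a fixed
square root of `q`, so that `q^(n²/2) = z^(n²)`. -/
def Twar (z q : ℂ) (L M a b : ℤ) : ℂ :=
  ∑' n : ℕ, if (L - a - (n : ℤ)) % 2 = 0 then
    z ^ (n ^ 2) * qBinom q M (n : ℤ) * qBinom q (M + b + (L - a - (n : ℤ)) / 2) (M + b) *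
      qBinom q (M - b + (L + a - (n : ℤ)) / 2) (M - b)
  else 0

/-- Warnaar's refined q-trinomial coefficient `S(L, M; a, b; q)`. -/
def Swar (q : ℂ) (L M a b : ℤ) : ℂ :=
  ∑' n : ℕ, q ^ ((n : ℤ) * ((n : ℤ) + a)) * qBinom q (M + L - a - 2 * (n : ℤ)) M *
    qBinom q (M - a + b) (n : ℤ) * qBinom q (M + a - b) ((n : ℤ) + a)

/-- The Andrews–Baxter q-trinomial coefficient `(L, b; a; q)₂`. -/
def roundTri (q : ℂ) (L : ℕ) (b a : ℤ) : ℂ :=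
  ∑' n : ℕ, q ^ ((n : ℤ) * ((n : ℤ) + b)) * qPoch q q L * invPoch q q (n : ℤ) *
    invPoch q q ((n : ℤ) + a) * invPoch q q ((L : ℤ) - 2 * (n : ℤ) - a)

/-- The Andrews–Baxter q-trinomial `T₀(L; a; q) = q^((L²-a²)/2) (L,a;a;1/q)₂`, where `z`
is a fixed square root of `q`, so that `q^((L²-a²)/2) = z^(L²-a²)`. -/
def T0 (z q : ℂ) (L : ℕ) (a : ℤ) : ℂ := z ^ ((L : ℤ) ^ 2 - a ^ 2) * roundTri q⁻¹ L a a

/-- The partial sum `N_k = n_k + n_(k+1) + ... + n_ν` (0-indexed). -/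
def Nsum {ν : ℕ} (n : Fin ν → ℕ) (k : Fin ν) : ℕ := ∑ l : Fin ν, if k ≤ l then n l else 0

end


open PowerSeries

section QBinomial

variable {b : ℂ}

lemma norm_pow_lt_one (hb : ‖b‖ < 1) {k : ℕ} (hk : k ≠ 0) : ‖b ^ k‖ < 1 := by
  rw [norm_pow]; exact pow_lt_one₀ (norm_nonneg b) hb hk

lemma qPoch_ne_zero (hb : ‖b‖ < 1) (n : ℕ) : qPoch b b n ≠ 0 := by
  refine Finset.prod_ne_zero_iff.mpr fun k _ hk => ?_
  have hpow : b ^ (k + 1) = 1 := by linear_combination -hk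
  have : ‖b‖ ^ (k + 1) < 1 := pow_lt_one₀ (norm_nonneg b) hb k.succ_ne_zero
  rw [← norm_pow, hpow, norm_one] at this
  exact this.false

lemma qPoch_zero (a q : ℂ) : qPoch a q 0 = 1 := rfl

lemma qBinom_of_lt {N k : ℤ} (h : N < k) : qBinom b N k = 0 := by
  rw [qBinom, if_neg (by omega)]

lemma qBinom_of_neg {N k : ℤ} (h : k < 0) : qBinom b N k = 0 := by
  rw [qBinom, if_neg (by omega)]

lemma qBinom_zero_right (hb : ‖b‖ < 1) {N : ℤ} (hN : 0 ≤ N) : qBinom b N 0 = 1 := by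
  rw [qBinom, if_pos ⟨le_rfl, hN⟩, sub_zero, Int.toNat_zero, qPoch_zero, one_mul]
  exact div_self (qPoch_ne_zero hb _)

lemma qBinom_self (hb : ‖b‖ < 1) {N : ℤ} (hN : 0 ≤ N) : qBinom b N N = 1 := by
  rw [qBinom, if_pos ⟨hN, le_rfl⟩, sub_self, Int.toNat_zero, qPoch_zero, mul_one]
  exact div_self (qPoch_ne_zero hb _)

lemma qBinom_symm (N k : ℤ) : qBinom b N k = qBinom b N (N - k) := by
  unfold qBinom
  by_cases h : 0 ≤ k ∧ k ≤ N
  · rw [if_pos h, if_pos (by omega), sub_sub_cancel, mul_comm]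
  · rw [if_neg h, if_neg (by omega)]

lemma qBinom_pascal (hb : ‖b‖ < 1) {N : ℤ} (hN : 0 ≤ N) (k : ℤ) :
    qBinom b (N + 1) (k + 1) = qBinom b N (k + 1) + b ^ (N - k) * qBinom b N k := by
  rcases lt_trichotomy k (-1) with hk | rfl | hk
  · rw [qBinom_of_neg (by omega), qBinom_of_neg (by omega), qBinom_of_neg (by omega)]; ring
  · rw [neg_add_cancel, qBinom_zero_right hb (by omega), qBinom_zero_right hb hN,
      qBinom_of_neg (by omega)]; ring
  rcases lt_trichotomy k N with hkN | rfl | hkN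
  · obtain ⟨j, rfl⟩ : ∃ j : ℕ, k = j := ⟨k.toNat, by omega⟩
    obtain ⟨d, rfl⟩ : ∃ d : ℕ, N = j + d + 1 := ⟨(N - j - 1).toNat, by omega⟩
    have hP (n : ℕ) : qPoch b b (n + 1) = qPoch b b n * (1 - b ^ (n + 1)) := by
      rw [qPoch, Finset.prod_range_succ, ← pow_succ']; rfl
    have hne := qPoch_ne_zero hb
    have h1 : 1 - b ^ (j + 1) ≠ 0 := right_ne_zero_of_mul (hP j ▸ hne (j + 1))
    have h2 : 1 - b ^ (d + 1) ≠ 0 := right_ne_zero_of_mul (hP d ▸ hne (d + 1))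
    unfold qBinom
    rw [if_pos (by omega), if_pos (by omega), if_pos (by omega),
      show ((j : ℤ) + d + 1 + 1).toNat = j + 1 + d + 1 by omega,
      show ((j : ℤ) + 1).toNat = j + 1 by omega,
      show ((j : ℤ) + d + 1 + 1 - (j + 1)).toNat = d + 1 by omega,
      show ((j : ℤ) + d + 1).toNat = j + 1 + d by omega,
      show ((j : ℤ) + d + 1 - (j + 1)).toNat = d by omega,
      show (j : ℤ).toNat = j by omega,
      show ((j : ℤ) + d + 1 - j).toNat = d + 1 by omega,
      show (j : ℤ) + d + 1 - j = ((d + 1 : ℕ) : ℤ) by omega, zpow_natCast,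
      hP (j + 1 + d), hP j, hP d]
    field_simp [hne j, hne d, hne (j + 1 + d)]
    ring
  · rw [sub_self, zpow_zero, qBinom_self hb (by omega), qBinom_of_lt (by omega),
      qBinom_self hb hN]; ring
  · rw [qBinom_of_lt (by omega), qBinom_of_lt (by omega), qBinom_of_lt hkN]; ring

end QBinomial

section QBinomialTheorem

variable {b : ℂ}

lemma choose_two_succ (n : ℕ) : (n + 1).choose 2 = n + n.choose 2 := by
  simpa using Nat.choose_succ_succ n 1

lemma two_mul_choose_two_add (n : ℕ) : 2 * n.choose 2 + n = n ^ 2 := by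
  induction n with
  | zero => rfl
  | succ n ih => rw [choose_two_succ]; nlinarith [ih]

lemma coeff_add_C_mul_X_mul (f : ℕ → ℂ) (e : ℂ) (n : ℕ) :
    coeff (n + 1) (PowerSeries.mk f + C e * (X * PowerSeries.mk f)) = f (n + 1) + e * f n := by
  rw [map_add, coeff_C_mul, coeff_succ_X_mul, coeff_mk, coeff_mk]

lemma prod_one_add_C_mul_X (hb : ‖b‖ < 1) (c : ℂ) (t : ℕ) :
    ∏ k ∈ Finset.range t, (1 + C (c * b ^ k) * X)
      = PowerSeries.mk fun a => b ^ a.choose 2 * c ^ a * qBinom b t a := by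
  induction t with
  | zero =>
    ext (_ | a)
    · simp [qBinom_self hb le_rfl]
    · simp [qBinom_of_lt (b := b) (N := 0) (k := (a : ℤ) + 1) (by omega)]
  | succ t ih =>
    rw [Finset.prod_range_succ, ih, show ∀ p e : ℂ⟦X⟧, p * (1 + e * X) = p + e * (X * p) by
      intros; ring]
    ext (_ | a)
    · simp [qBinom_zero_right hb (show 0 ≤ (t : ℤ) + 1 by omega),
        qBinom_zero_right hb (Int.natCast_nonneg t)]
    rw [coeff_add_C_mul_X_mul, coeff_mk]
    push_cast
    rw [qBinom_pascal hb (by omega)]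
    rcases le_or_gt a t with hat | hta
    · have hexp : b ^ (a + 1).choose 2 * b ^ (t - a) = b ^ t * b ^ a.choose 2 := by
        rw [← pow_add, ← pow_add, choose_two_succ]; congr 1; omega
      rw [show (t : ℤ) - a = ((t - a : ℕ) : ℤ) by omega, zpow_natCast]
      linear_combination (-c ^ (a + 1) * qBinom b t a) * hexp
    · rw [qBinom_of_lt (by omega : (t : ℤ) < a)]; ring

lemma prod_one_add_C_mul_sq_pow_mul_X {c : ℂ} (hc : ‖c ^ 2‖ < 1) (t : ℕ) :
    ∏ k ∈ Finset.range t, (1 + C (c * (c ^ 2) ^ k) * X)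
      = PowerSeries.mk fun n => c ^ (n ^ 2) * qBinom (c ^ 2) t n := by
  rw [prod_one_add_C_mul_X hc]
  congr 1; ext n
  rw [← pow_mul, ← pow_add, two_mul_choose_two_add]

end QBinomialTheorem

section NegativeQBinomial

variable {b : ℂ}

noncomputable def qNegBinomSeries (b : ℂ) (J : ℕ) : ℂ⟦X⟧ :=
  PowerSeries.mk fun t => if Even t then qBinom b (J + (t / 2 : ℕ)) (t / 2 : ℕ) else 0

lemma coeff_mul_one_sub_C_mul_X_sq (f : ℂ⟦X⟧) (e : ℂ) (n : ℕ) :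
    coeff n (f * (1 - C e * X ^ 2)) = coeff n f - if 2 ≤ n then e * coeff (n - 2) f else 0 := by
  rw [show f * (1 - C e * X ^ 2) = f - C e * (f * X ^ 2) by ring, map_sub, coeff_C_mul,
    coeff_mul_X_pow', mul_ite, mul_zero]

lemma qNegBinomSeries_zero_mul (hb : ‖b‖ < 1) : qNegBinomSeries b 0 * (1 - X ^ 2) = 1 := by
  rw [show (1 - X ^ 2 : ℂ⟦X⟧) = 1 - C 1 * X ^ 2 by simp]
  ext n
  rw [coeff_mul_one_sub_C_mul_X_sq]
  rcases n with _ | _ | n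
  · simp [qNegBinomSeries, qBinom_self hb]
  · simp [qNegBinomSeries]
  · simp only [qNegBinomSeries, coeff_mk, coeff_one, Nat.even_add_one, not_not, CharP.cast_eq_zero,
      zero_add, show n + 1 + 1 - 2 = n by omega, if_pos (by omega : 2 ≤ n + 1 + 1),
      if_neg (by omega : n + 1 + 1 ≠ 0)]
    split_ifs
    · rw [qBinom_self hb (Int.natCast_nonneg _), qBinom_self hb (Int.natCast_nonneg _)]
      ring
    · ring

lemma qNegBinomSeries_succ_mul (hb : ‖b‖ < 1) (J : ℕ) :
    qNegBinomSeries b (J + 1) * (1 - C (b ^ (J + 1)) * X ^ 2) = qNegBinomSeries b J := by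
  ext n
  rw [coeff_mul_one_sub_C_mul_X_sq]
  rcases n with _ | _ | n
  · simp [qNegBinomSeries, qBinom_zero_right hb (show 0 ≤ (J : ℤ) + 1 by omega),
      qBinom_zero_right hb (Int.natCast_nonneg J)]
  · simp [qNegBinomSeries]
  simp only [qNegBinomSeries, coeff_mk, Nat.even_add_one, not_not,
    show n + 1 + 1 - 2 = n by omega, if_pos (by omega : 2 ≤ n + 1 + 1)]
  split_ifs with hn
  · obtain ⟨m, rfl⟩ := hn
    rw [show (m + m + 1 + 1) / 2 = m + 1 by omega, show (m + m) / 2 = m by omega]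
    push_cast
    rw [show (J : ℤ) + 1 + (m + 1) = J + 1 + m + 1 by ring, qBinom_pascal hb (by omega),
      show (J : ℤ) + 1 + m - m = ((J + 1 : ℕ) : ℤ) by push_cast; ring, zpow_natCast]
    ring_nf
  · ring

lemma prod_mul_qNegBinomSeries (hb : ‖b‖ < 1) (J : ℕ) :
    (∏ k ∈ Finset.range (J + 1), (1 - C (b ^ k) * X ^ 2)) * qNegBinomSeries b J = 1 := by
  induction J with
  | zero => simpa [mul_comm] using qNegBinomSeries_zero_mul hb
  | succ J ih =>
    rw [Finset.prod_range_succ, mul_assoc, mul_comm (1 - _), qNegBinomSeries_succ_mul hb, ih]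

end NegativeQBinomial

section TrinomialSeries

variable {q : ℂ}

noncomputable def qWeight (q : ℂ) (j : ℤ) : ℂ := q ^ (3 * j ^ 2 + 2 * j)

noncomputable def qTrinomialSeries (q : ℂ) (M₁ M₂ : ℕ) : ℂ⟦X⟧ :=
  PowerSeries.mk fun N => ∑ p ∈ antidiagonal N,
    qWeight q (p.2 - p.1) * qBinom (q ^ 6) (M₁ + p.2) p.1 * qBinom (q ^ 6) (M₂ + p.1) p.2

lemma pow_zpow_eq_zpow_mul {G : Type*} [DivisionMonoid G] (a : G) (n : ℕ) (e : ℤ) :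
    (a ^ n) ^ e = a ^ (n * e) := by
  rw [zpow_mul]; norm_cast

lemma qWeight_sub_one_mul (hq : q ≠ 0) (M : ℕ) (j : ℤ) :
    qWeight q (j - 1) * (q ^ 6) ^ ((M : ℤ) + j) = q * (q ^ 6) ^ M * qWeight q j := by
  rw [qWeight, qWeight, pow_zpow_eq_zpow_mul, ← zpow_add₀ hq,
    show 3 * (j - 1) ^ 2 + 2 * (j - 1) + ((6 : ℕ) : ℤ) * (M + j)
      = 3 * j ^ 2 + 2 * j + ((6 * M + 1 : ℕ) : ℤ) by push_cast; ring,
    zpow_add₀ hq, zpow_natCast]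
  ring

lemma qWeight_add_one_mul (hq : q ≠ 0) (M : ℕ) (j : ℤ) :
    qWeight q (j + 1) * (q ^ 6) ^ ((M : ℤ) - j) = q ^ 5 * (q ^ 6) ^ M * qWeight q j := by
  rw [qWeight, qWeight, pow_zpow_eq_zpow_mul, ← zpow_add₀ hq,
    show 3 * (j + 1) ^ 2 + 2 * (j + 1) + ((6 : ℕ) : ℤ) * (M - j)
      = 3 * j ^ 2 + 2 * j + ((6 * M + 5 : ℕ) : ℤ) by push_cast; ring,
    zpow_add₀ hq, zpow_natCast]
  ring

lemma qTrinomialSeries_succ_left (hq : q ≠ 0) (hq1 : ‖q‖ < 1) (M₁ M₂ : ℕ) :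
    qTrinomialSeries q (M₁ + 1) M₂ = qTrinomialSeries q M₁ M₂
      + C (q * (q ^ 6) ^ M₁) * (X * qTrinomialSeries q M₁ (M₂ + 1)) := by
  have hQ := norm_pow_lt_one hq1 (k := 6) (by norm_num)
  ext (_ | N)
  · simp [qTrinomialSeries, qBinom_zero_right hQ (show 0 ≤ (M₁ : ℤ) + 1 by omega),
      qBinom_zero_right hQ (Int.natCast_nonneg _)]
  rw [map_add, coeff_C_mul, coeff_succ_X_mul]
  simp only [qTrinomialSeries, coeff_mk]
  rw [Finset.Nat.sum_antidiagonal_succ, Finset.Nat.sum_antidiagonal_succ, add_assoc,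
    Finset.mul_sum, ← Finset.sum_add_distrib]
  push_cast
  congr 1
  · rw [qBinom_zero_right hQ (by positivity), qBinom_zero_right hQ (by positivity)]
  refine Finset.sum_congr rfl fun p _ => ?_
  rw [show (M₁ : ℤ) + 1 + p.2 = M₁ + p.2 + 1 by ring, qBinom_pascal hQ (by positivity),
    show (M₁ : ℤ) + p.2 - p.1 = M₁ + (p.2 - p.1) by ring,
    show (p.2 : ℤ) - (p.1 + 1) = p.2 - p.1 - 1 by ring,
    show (M₂ : ℤ) + 1 + p.1 = M₂ + (p.1 + 1) by ring]
  linear_combination (qBinom (q ^ 6) (M₁ + p.2) p.1 * qBinom (q ^ 6) (M₂ + (p.1 + 1)) p.2) *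
    qWeight_sub_one_mul hq M₁ ((p.2 : ℤ) - p.1)

lemma qTrinomialSeries_succ_right (hq : q ≠ 0) (hq1 : ‖q‖ < 1) (M₁ M₂ : ℕ) :
    qTrinomialSeries q M₁ (M₂ + 1) = qTrinomialSeries q M₁ M₂
      + C (q ^ 5 * (q ^ 6) ^ M₂) * (X * qTrinomialSeries q (M₁ + 1) M₂) := by
  have hQ := norm_pow_lt_one hq1 (k := 6) (by norm_num)
  ext (_ | N)
  · simp [qTrinomialSeries, qBinom_zero_right hQ (show 0 ≤ (M₂ : ℤ) + 1 by omega),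
      qBinom_zero_right hQ (Int.natCast_nonneg _)]
  rw [map_add, coeff_C_mul, coeff_succ_X_mul]
  simp only [qTrinomialSeries, coeff_mk]
  rw [Finset.Nat.sum_antidiagonal_succ', Finset.Nat.sum_antidiagonal_succ', add_assoc,
    Finset.mul_sum, ← Finset.sum_add_distrib]
  push_cast
  congr 1
  · rw [qBinom_zero_right hQ (by positivity), qBinom_zero_right hQ (by positivity)]
  refine Finset.sum_congr rfl fun p _ => ?_
  rw [show (M₂ : ℤ) + 1 + p.1 = M₂ + p.1 + 1 by ring, qBinom_pascal hQ (by positivity),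
    show (M₂ : ℤ) + p.1 - p.2 = M₂ - (p.2 - p.1) by ring,
    show (p.2 : ℤ) + 1 - p.1 = p.2 - p.1 + 1 by ring,
    show (M₁ : ℤ) + 1 + p.2 = M₁ + (p.2 + 1) by ring]
  linear_combination (qBinom (q ^ 6) (M₁ + (p.2 + 1)) p.1 * qBinom (q ^ 6) (M₂ + p.1) p.2) *
    qWeight_add_one_mul hq M₂ ((p.2 : ℤ) - p.1)

lemma qTrinomialSeries_zero_zero (hq1 : ‖q‖ < 1) :
    qTrinomialSeries q 0 0 = qNegBinomSeries (q ^ 6) 0 := by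
  have hQ := norm_pow_lt_one hq1 (k := 6) (by norm_num)
  ext N
  simp only [qTrinomialSeries, qNegBinomSeries, coeff_mk, Nat.cast_zero, zero_add]
  have hdiag : ∀ p ∈ antidiagonal N, p.1 ≠ p.2 →
      qWeight q (p.2 - p.1) * qBinom (q ^ 6) p.2 p.1 * qBinom (q ^ 6) p.1 p.2 = 0 := by
    intro p _ hp
    rcases Nat.lt_or_gt_of_ne hp with h | h
    · rw [qBinom_of_lt (by omega : (p.1 : ℤ) < p.2), mul_zero]
    · rw [qBinom_of_lt (by omega : (p.2 : ℤ) < p.1), mul_zero, zero_mul]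
  split_ifs with hN
  · obtain ⟨m, rfl⟩ := hN
    rw [Finset.sum_eq_single_of_mem (m, m) (by simp) fun p hp hpm => hdiag p hp fun h => hpm ?_]
    · simp [qWeight, show (m + m) / 2 = m by omega, qBinom_self hQ (Int.natCast_nonneg m)]
    · have := mem_antidiagonal.mp hp
      ext <;> simp <;> omega
  · refine Finset.sum_eq_zero fun p hp => hdiag p hp fun h => hN ⟨p.1, ?_⟩
    have := mem_antidiagonal.mp hp
    omega

lemma qTrinomialSeries_succ_left_mul (hq : q ≠ 0) (hq1 : ‖q‖ < 1) (M₁ M₂ : ℕ) :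
    qTrinomialSeries q (M₁ + 1) M₂ * (1 - C ((q ^ 6) ^ (M₁ + M₂ + 1)) * X ^ 2)
      = (1 + C (q * (q ^ 6) ^ M₁) * X) * qTrinomialSeries q M₁ M₂ := by
  have hl := qTrinomialSeries_succ_left hq hq1 M₁ M₂
  have hr := qTrinomialSeries_succ_right hq hq1 M₁ M₂
  simp only [map_mul, map_pow] at hl hr ⊢
  linear_combination hl + (C q * (C q ^ 6) ^ M₁ * X) * hr

lemma qTrinomialSeries_succ_right_mul (hq : q ≠ 0) (hq1 : ‖q‖ < 1) (M₁ M₂ : ℕ) :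
    qTrinomialSeries q M₁ (M₂ + 1) * (1 - C ((q ^ 6) ^ (M₁ + M₂ + 1)) * X ^ 2)
      = (1 + C (q ^ 5 * (q ^ 6) ^ M₂) * X) * qTrinomialSeries q M₁ M₂ := by
  have hl := qTrinomialSeries_succ_left hq hq1 M₁ M₂
  have hr := qTrinomialSeries_succ_right hq hq1 M₁ M₂
  simp only [map_mul, map_pow] at hl hr ⊢
  linear_combination hr + (C q ^ 5 * (C q ^ 6) ^ M₂ * X) * hl

lemma qTrinomialSeries_mul_prod (hq : q ≠ 0) (hq1 : ‖q‖ < 1) (M : ℕ) :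
    qTrinomialSeries q M M * ∏ k ∈ Finset.range (2 * M + 1), (1 - C ((q ^ 6) ^ k) * X ^ 2)
      = (∏ k ∈ Finset.range M, (1 + C (q * (q ^ 6) ^ k) * X))
        * ∏ k ∈ Finset.range M, (1 + C (q ^ 5 * (q ^ 6) ^ k) * X) := by
  induction M with
  | zero =>
    have hQ := norm_pow_lt_one hq1 (k := 6) (by norm_num)
    rw [qTrinomialSeries_zero_zero hq1, mul_comm]
    simpa using prod_mul_qNegBinomSeries hQ 0
  | succ M ih =>
    have hl := qTrinomialSeries_succ_left_mul hq hq1 M M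
    have hr := qTrinomialSeries_succ_right_mul hq hq1 (M + 1) M
    rw [show M + M + 1 = 2 * M + 1 by ring] at hl
    rw [show M + 1 + M + 1 = 2 * M + 1 + 1 by ring] at hr
    rw [show 2 * (M + 1) + 1 = 2 * M + 1 + 1 + 1 by ring, Finset.prod_range_succ _ (2 * M + 1 + 1),
      Finset.prod_range_succ _ (2 * M + 1), Finset.prod_range_succ _ M, Finset.prod_range_succ _ M]
    set D := ∏ k ∈ Finset.range (2 * M + 1), (1 - C ((q ^ 6) ^ k) * X ^ 2)
    linear_combination (D * (1 - C ((q ^ 6) ^ (2 * M + 1)) * X ^ 2)) * hr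
      + (D * (1 + C (q ^ 5 * (q ^ 6) ^ M) * X)) * hl
      + ((1 + C (q * (q ^ 6) ^ M) * X) * (1 + C (q ^ 5 * (q ^ 6) ^ M) * X)) * ih

end TrinomialSeries

section KeyIdentity

variable {q : ℂ}

lemma prod_range_three_mul {R : Type*} [CommMonoid R] (f : ℕ → R) (M : ℕ) :
    ∏ k ∈ Finset.range (3 * M), f k
      = (∏ k ∈ Finset.range M, f (3 * k + 1))
        * ((∏ k ∈ Finset.range M, f (3 * k)) * ∏ k ∈ Finset.range M, f (3 * k + 2)) := by
  induction M with
  | zero => simp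
  | succ M ih =>
    rw [show 3 * (M + 1) = 3 * M + 1 + 1 + 1 by ring, Finset.prod_range_succ,
      Finset.prod_range_succ, Finset.prod_range_succ, ih, Finset.prod_range_succ,
      Finset.prod_range_succ, Finset.prod_range_succ, show 3 * M + 1 + 1 = 3 * M + 2 by ring]
    ac_rfl

lemma mk_mul_qNegBinomSeries_eq_mk_mul_qTrinomialSeries (hq : q ≠ 0) (hq1 : ‖q‖ < 1)
    (M : ℕ) :
    PowerSeries.mk (fun m => q ^ (m ^ 2) * qBinom (q ^ 2) (3 * (M : ℤ)) m)
        * qNegBinomSeries (q ^ 6) (2 * M)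
      = PowerSeries.mk (fun n => (q ^ 3) ^ (n ^ 2) * qBinom (q ^ 6) M n)
        * qTrinomialSeries q M M := by
  have hnorm {k : ℕ} (hk : k ≠ 0) := norm_pow_lt_one hq1 hk
  have hodd := prod_one_add_C_mul_sq_pow_mul_X (hnorm two_ne_zero) (3 * M)
  have hthird := prod_one_add_C_mul_sq_pow_mul_X (c := q ^ 3)
    (by rw [← pow_mul]; exact hnorm (by norm_num)) M
  push_cast at hodd
  rw [← pow_mul] at hthird
  rw [← hodd, ← hthird, prod_range_three_mul]
  simp only [show ∀ k : ℕ, q * (q ^ 2) ^ (3 * k + 1) = q ^ 3 * (q ^ 6) ^ k by intro; ring,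
    show ∀ k : ℕ, q * (q ^ 2) ^ (3 * k) = q * (q ^ 6) ^ k by intro; ring,
    show ∀ k : ℕ, q * (q ^ 2) ^ (3 * k + 2) = q ^ 5 * (q ^ 6) ^ k by intro; ring]
  rw [← qTrinomialSeries_mul_prod hq hq1, mul_assoc, mul_assoc,
    prod_mul_qNegBinomSeries (hnorm (by norm_num)), mul_one]

end KeyIdentity

section Coefficients

variable {q : ℂ}

lemma tsum_parity_mul_qBinom_eq_coeff (f : ℕ → ℂ) (b : ℂ) (J L : ℕ) :
    (∑' m : ℕ, if m % 2 = L % 2 then f m * qBinom b (J + ((L : ℤ) - m) / 2) J else 0)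
      = coeff L (PowerSeries.mk f * qNegBinomSeries b J) := by
  rw [coeff_mul, Finset.Nat.sum_antidiagonal_eq_sum_range_succ
    (fun i j => coeff i (PowerSeries.mk f) * coeff j (qNegBinomSeries b J))]
  refine (tsum_eq_sum fun m hm => ?_).trans (Finset.sum_congr rfl fun m hm => ?_)
  · rw [Finset.mem_range, not_lt] at hm
    split_ifs
    · rw [qBinom_of_lt (by omega), mul_zero]
    · rfl
  · rw [Finset.mem_range] at hm
    simp only [qNegBinomSeries, coeff_mk, Nat.even_iff]
    by_cases hpar : m % 2 = L % 2
    · rw [if_pos hpar, if_pos (by omega), qBinom_symm]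
      congr 2 <;> omega
    · rw [if_neg hpar, if_neg (by omega), mul_zero]

lemma Twar_eq_sum_range (z b : ℂ) (L : ℕ) (M a c : ℤ) :
    Twar z b L M a c = ∑ n ∈ Finset.range (L + 1),
      if (L - a - n) % 2 = 0 then
        z ^ (n ^ 2) * qBinom b M n * qBinom b (M + c + (L - a - n) / 2) (M + c) *
          qBinom b (M - c + (L + a - n) / 2) (M - c)
      else 0 := by
  refine tsum_eq_sum fun n hn => ?_
  rw [Finset.mem_range, not_lt] at hn
  split_ifs
  · rcases (by omega : ((L : ℤ) - a - n) / 2 < 0 ∨ ((L : ℤ) + a - n) / 2 < 0) with h | h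
    · rw [qBinom_of_lt (by omega : M + c + ((L : ℤ) - a - n) / 2 < M + c), mul_zero, zero_mul]
    · rw [qBinom_of_lt (by omega : M - c + ((L : ℤ) + a - n) / 2 < M - c), mul_zero]
  · rfl

lemma hasSum_qWeight_mul_Twar_summand (c : ℂ) {L n : ℕ} (hn : n ≤ L) (M : ℕ) :
    HasSum (fun j : ℤ => qWeight q j *
        if (L - j - n) % 2 = 0 then
          c * qBinom (q ^ 6) (M + j + (L - j - n) / 2) (M + j) *
            qBinom (q ^ 6) (M - j + (L + j - n) / 2) (M - j)
        else 0)
      (c * coeff (L - n) (qTrinomialSeries q M M)) := by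
  -- `j = s - r` with `r + s = L - n`; then `(L - j - n) / 2 = r` and `(L + j - n) / 2 = s`.
  set S := (antidiagonal (L - n)).image fun p => (p.2 : ℤ) - p.1
  have hinj : Set.InjOn (fun p : ℕ × ℕ => (p.2 : ℤ) - p.1) (antidiagonal (L - n)) := by
    intro p hp p' hp' h
    have := mem_antidiagonal.mp hp
    have := mem_antidiagonal.mp hp'
    simp only at h
    ext <;> omega
  convert hasSum_sum_of_ne_finset_zero (L := SummationFilter.unconditional ℤ) (s := S)
    fun j hj => ?_ using 1
  · rw [Finset.sum_image hinj, qTrinomialSeries, coeff_mk, Finset.mul_sum]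
    refine Finset.sum_congr rfl fun p hp => ?_
    have hp := mem_antidiagonal.mp hp
    rw [if_pos (by omega), show ((L : ℤ) - (p.2 - p.1) - n) / 2 = p.1 by omega,
      show ((L : ℤ) + (p.2 - p.1) - n) / 2 = p.2 by omega,
      qBinom_symm (M + ((p.2 : ℤ) - p.1) + p.1), qBinom_symm (M - ((p.2 : ℤ) - p.1) + p.2)]
    rw [show (M : ℤ) + (p.2 - p.1) + p.1 - (M + (p.2 - p.1)) = p.1 by ring,
      show (M : ℤ) + (p.2 - p.1) + p.1 = M + p.2 by ring,
      show (M : ℤ) - (p.2 - p.1) + p.2 - (M - (p.2 - p.1)) = p.2 by ring,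
      show (M : ℤ) - (p.2 - p.1) + p.2 = M + p.1 by ring]
    ring
  · split_ifs with hpar
    · have hout : ((L : ℤ) - j - n) / 2 < 0 ∨ ((L : ℤ) + j - n) / 2 < 0 := by
        by_contra! h
        refine hj (Finset.mem_image.mpr ⟨((((L : ℤ) - j - n) / 2).toNat,
          (((L : ℤ) + j - n) / 2).toNat), mem_antidiagonal.mpr ?_, ?_⟩) <;> omega
      rcases hout with h | h
      · rw [qBinom_of_lt (by omega : M + j + ((L : ℤ) - j - n) / 2 < M + j)]; ring
      · rw [qBinom_of_lt (by omega : M - j + ((L : ℤ) + j - n) / 2 < M - j)]; ring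
    · rw [mul_zero]

lemma tsum_pow_mul_Twar_eq_coeff (L M : ℕ) :
    ∑' j : ℤ, q ^ (3 * j ^ 2 + 2 * j) * Twar (q ^ 3) (q ^ 6) L M j j
      = coeff L (PowerSeries.mk (fun n => (q ^ 3) ^ (n ^ 2) * qBinom (q ^ 6) M n)
          * qTrinomialSeries q M M) := by
  rw [coeff_mul, Finset.Nat.sum_antidiagonal_eq_sum_range_succ
    (fun n t => coeff n (PowerSeries.mk _) * coeff t (qTrinomialSeries q M M))]
  simp_rw [Twar_eq_sum_range, Finset.mul_sum, coeff_mk]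
  exact (hasSum_sum fun n hn =>
    hasSum_qWeight_mul_Twar_summand _ (Finset.mem_range_succ_iff.mp hn) M).tsum_eq

end Coefficients

theorem statement_0 (L M : ℕ) (q : ℂ) (h0 : 0 < ‖q‖) (h1 : ‖q‖ < 1) :
    (∑' m : ℕ, if m % 2 = L % 2 then
        q ^ (m ^ 2) * qBinom (q ^ 2) (3 * (M : ℤ)) (m : ℤ) *
          qBinom (q ^ 6) (2 * (M : ℤ) + ((L : ℤ) - (m : ℤ)) / 2) (2 * (M : ℤ))
      else 0)
    = ∑' j : ℤ, q ^ (3 * j ^ 2 + 2 * j) * Twar (q ^ 3) (q ^ 6) (L : ℤ) (M : ℤ) j j := by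
  have hq : q ≠ 0 := norm_pos_iff.mp h0
  have hlhs := tsum_parity_mul_qBinom_eq_coeff
    (fun m => q ^ (m ^ 2) * qBinom (q ^ 2) (3 * (M : ℤ)) m) (q ^ 6) (2 * M) L
  push_cast at hlhs
  rw [hlhs, tsum_pow_mul_Twar_eq_coeff, mk_mul_qNegBinomSeries_eq_mk_mul_qTrinomialSeries hq h1]
end

section
/- Let q be a complex number with 0<|q|<1 and let z be a fixed square root of q. Let M ≥ 0 be an integer, a, b integers, and σ ∈ {0,1}. Then the limit of T(L, M; a, b; q) as L → ∞ along integers L with L − a ≡ σ (mod 2) exists and equals ( (−z;q)_M + (−1)^σ (z;q)_M ) / ( 2 (q;q)_{2M} ) · [2M choose M−b]_q. -/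
open Finset

/-! The Gaussian coefficients `[N, k]_q` with `k` fixed tend to `1/(q;q)_k` as `N → ∞`, and the
two outer coefficients in `T(L, M; a, b; q)` have top index growing like `L/2`, while only
`n ≤ M` contribute. Along `L ≡ a + σ (mod 2)` the surviving terms are those with `n ≡ σ`, so the
limit is `∑_{n ≡ σ} q^(n²/2) [M, n]_q / ((q;q)_(M+b) (q;q)_(M-b))`. The Cauchy binomial theorem
`∑ₙ q^(n(n-1)/2) tⁿ [M, n]_q = (-t;q)_M` at `t = ±z` gives this parity-restricted sum as
`((-z;q)_M ± (z;q)_M) / 2`, and `(q;q)_(2M) / ((q;q)_(M+b) (q;q)_(M-b)) = [2M, M-b]_q`. -/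

open Filter Topology

section QBinomial

variable {q : ℂ}

lemma qPoch_succ (a : ℂ) (n : ℕ) : qPoch a q (n + 1) = qPoch a q n * (1 - a * q ^ n) :=
  prod_range_succ _ _

lemma qPoch_add (a : ℂ) (m n : ℕ) :
    qPoch a q (m + n) = qPoch a q m * ∏ j ∈ range n, (1 - a * q ^ (m + j)) :=
  prod_range_add _ _ _

lemma qPoch_ne_zero_s3 {a : ℂ} (ha : ‖a‖ < 1) (hq : ‖q‖ ≤ 1) (n : ℕ) : qPoch a q n ≠ 0 := by
  refine prod_ne_zero_iff.2 fun k _ h => ?_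
  have hlt : ‖a * q ^ k‖ < 1 := by
    rw [norm_mul, norm_pow]
    calc ‖a‖ * ‖q‖ ^ k ≤ ‖a‖ * 1 := by gcongr; exact pow_le_one₀ (norm_nonneg _) hq
      _ < 1 := by simpa using ha
  rw [← sub_eq_zero.1 h, norm_one] at hlt
  exact lt_irrefl _ hlt

lemma qBinom_eq_mul_invPoch (N k : ℤ) :
    qBinom q N k = qPoch q q N.toNat * (invPoch q q k * invPoch q q (N - k)) := by
  unfold qBinom invPoch
  by_cases hk : 0 ≤ k
  · by_cases hkN : k ≤ N
    · rw [if_pos ⟨hk, hkN⟩, if_pos hk, if_pos (by omega), div_eq_mul_inv, mul_inv]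
    · simp [hk, hkN]
  · simp [hk]

lemma qBinom_eq_zero_of_lt {N k : ℤ} (h : N < k) : qBinom q N k = 0 :=
  if_neg (by omega)

lemma qBinom_natCast_add (k j : ℕ) :
    qBinom q ((k + j : ℕ) : ℤ) k = qPoch q q (k + j) / (qPoch q q k * qPoch q q j) := by
  rw [qBinom, if_pos (by omega), show ((k + j : ℕ) : ℤ) - k = j by push_cast; ring]
  simp only [Int.toNat_natCast]

lemma qBinom_natCast_zero (hq : ‖q‖ < 1) (N : ℕ) : qBinom q N 0 = 1 := by
  have h := qBinom_natCast_add (q := q) 0 N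
  rw [zero_add, Nat.cast_zero] at h
  rw [h, show qPoch q q 0 = 1 from prod_range_zero _, one_mul, div_self (qPoch_ne_zero_s3 hq hq.le N)]

lemma qBinom_natCast_self (hq : ‖q‖ < 1) (N : ℕ) : qBinom q N N = 1 := by
  have h := qBinom_natCast_add (q := q) N 0
  rw [Nat.add_zero] at h
  rw [h, show qPoch q q 0 = 1 from prod_range_zero _, mul_one, div_self (qPoch_ne_zero_s3 hq hq.le N)]

theorem qBinom_succ_succ (hq : ‖q‖ < 1) (M k : ℕ) :
    qBinom q ↑(M + 1) ↑(k + 1) = qBinom q ↑M ↑(k + 1) + q ^ (M - k) * qBinom q ↑M ↑k := by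
  rcases lt_or_ge M k with hMk | hkM
  · simp only [qBinom_eq_zero_of_lt (by omega : ((M + 1 : ℕ) : ℤ) < (k + 1 : ℕ)),
      qBinom_eq_zero_of_lt (by omega : (M : ℤ) < (k + 1 : ℕ)),
      qBinom_eq_zero_of_lt (by omega : (M : ℤ) < k), mul_zero, add_zero]
  obtain ⟨j, rfl⟩ := Nat.exists_eq_add_of_le hkM
  rcases j with _ | i
  · simp only [Nat.add_zero, Nat.sub_self, pow_zero, one_mul, qBinom_natCast_self hq,
      qBinom_eq_zero_of_lt (by omega : (k : ℤ) < (k + 1 : ℕ)), zero_add]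
  have e1 : qBinom q ↑(k + (i + 1) + 1) ↑(k + 1) =
      qPoch q q (k + 1 + i + 1) / (qPoch q q (k + 1) * qPoch q q (i + 1)) := by
    rw [show k + (i + 1) + 1 = (k + 1) + (i + 1) by ring, qBinom_natCast_add, ← add_assoc]
  have e2 : qBinom q ↑(k + (i + 1)) ↑(k + 1) =
      qPoch q q (k + 1 + i) / (qPoch q q (k + 1) * qPoch q q i) := by
    rw [show k + (i + 1) = (k + 1) + i by ring, qBinom_natCast_add]
  have e3 : qBinom q ↑(k + (i + 1)) ↑k =
      qPoch q q (k + 1 + i) / (qPoch q q k * qPoch q q (i + 1)) := by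
    rw [qBinom_natCast_add, show k + (i + 1) = k + 1 + i by ring]
  rw [e1, e2, e3, Nat.add_sub_cancel_left, qPoch_succ q (k + 1 + i), qPoch_succ q k,
    qPoch_succ q i]
  have hP : ∀ n, qPoch q q n ≠ 0 := qPoch_ne_zero_s3 hq hq.le
  have hfactor : ∀ n, 1 - q * q ^ n ≠ 0 := fun n h => hP (n + 1) (by rw [qPoch_succ, h, mul_zero])
  field_simp [hP (k + 1 + i), hP k, hP i, hfactor k, hfactor i]
  ring

theorem sum_qBinom_eq_qPoch (hq : ‖q‖ < 1) (t : ℂ) (M : ℕ) :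
    ∑ k ∈ range (M + 1), q ^ k.choose 2 * t ^ k * qBinom q M k = qPoch (-t) q M := by
  induction M with
  | zero => simpa [qPoch] using qBinom_natCast_zero hq 0
  | succ M ih =>
    have hpascal : ∀ j ∈ range (M + 1),
        q ^ (j + 1).choose 2 * t ^ (j + 1) * qBinom q ↑(M + 1) ↑(j + 1) =
          q ^ (j + 1).choose 2 * t ^ (j + 1) * qBinom q M ↑(j + 1) +
            t * q ^ M * (q ^ j.choose 2 * t ^ j * qBinom q M j) := by
      intro j hj
      have hpow : q ^ (j + 1).choose 2 * q ^ (M - j) = q ^ j.choose 2 * q ^ M := by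
        have hchoose : (j + 1).choose 2 = j.choose 2 + j := by
          rw [Nat.choose_succ_succ', Nat.choose_one_right, add_comm]
        rw [← pow_add, ← pow_add, hchoose]
        congr 1
        have := mem_range.1 hj
        omega
      rw [qBinom_succ_succ hq]
      linear_combination t ^ (j + 1) * qBinom q M j * hpow
    have hshift :=
      (sum_range_succ' (fun k => q ^ k.choose 2 * t ^ k * qBinom q M k) (M + 1)).symm.trans
        (sum_range_succ _ _)
    simp only [Nat.choose_zero_succ, pow_zero, Nat.cast_zero, qBinom_natCast_zero hq,
      qBinom_eq_zero_of_lt (by omega : (M : ℤ) < (M + 1 : ℕ)), mul_zero, add_zero, ih] at hshift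
    rw [sum_range_succ', sum_congr rfl hpascal, sum_add_distrib, ← mul_sum, ih, qPoch_succ]
    simp only [Nat.choose_zero_succ, pow_zero, Nat.cast_zero, qBinom_natCast_zero hq]
    linear_combination hshift

lemma pow_sq_eq_pow_choose_two_mul_pow {z : ℂ} (hz : z ^ 2 = q) (n : ℕ) :
    z ^ (n ^ 2) = q ^ n.choose 2 * z ^ n := by
  have hexp : n ^ 2 = 2 * n.choose 2 + n := by
    have : ((n ^ 2 : ℕ) : ℚ) = ((2 * n.choose 2 + n : ℕ) : ℚ) := by
      push_cast
      rw [Nat.cast_choose_two]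
      ring
    exact_mod_cast this
  rw [hexp, pow_add, pow_mul, hz]

theorem sum_parity_qBinom (hq : ‖q‖ < 1) {z : ℂ} (hz : z ^ 2 = q) {σ : ℕ} (hσ : σ = 0 ∨ σ = 1)
    (M : ℕ) :
    ∑ n ∈ range (M + 1), (if n % 2 = σ then z ^ (n ^ 2) * qBinom q M n else 0) =
      (qPoch (-z) q M + (-1) ^ σ * qPoch z q M) / 2 := by
  have hsign : ∀ (n : ℕ) (x : ℂ),
      (if n % 2 = σ then x else 0) * 2 = x * (1 + (-1) ^ σ * (-1) ^ n) := by
    intro n x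
    rw [neg_one_pow_eq_pow_mod_two (n := n)]
    rcases hσ with rfl | rfl <;> rcases Nat.mod_two_eq_zero_or_one n with h | h <;>
      norm_num [h]
  have hplus := sum_qBinom_eq_qPoch hq z M
  have hminus := sum_qBinom_eq_qPoch hq (-z) M
  rw [neg_neg] at hminus
  rw [eq_div_iff two_ne_zero, ← hplus, ← hminus, mul_sum, sum_mul, ← sum_add_distrib]
  refine sum_congr rfl fun n _ => ?_
  rw [hsign, neg_pow, pow_sq_eq_pow_choose_two_mul_pow hz]
  ring

lemma tendsto_qBinom_natCast_add (hq : ‖q‖ < 1) (k : ℕ) :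
    Tendsto (fun j : ℕ => qBinom q ↑(k + j) k) atTop (𝓝 (qPoch q q k)⁻¹) := by
  have hfactor : ∀ i : ℕ, Tendsto (fun j : ℕ => 1 - q * q ^ (j + i)) atTop (𝓝 1) := by
    intro i
    have hpow : Tendsto (fun j : ℕ => q ^ (j + i)) atTop (𝓝 0) :=
      (tendsto_pow_atTop_nhds_zero_of_norm_lt_one hq).comp (tendsto_add_atTop_nat i)
    simpa using tendsto_const_nhds.sub (hpow.const_mul q)
  have hprod := (tendsto_finsetProd (range k) fun i _ => hfactor i).div_const (qPoch q q k)
  rw [prod_const_one, one_div] at hprod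
  refine hprod.congr fun j => ?_
  rw [qBinom_natCast_add, add_comm k j, qPoch_add, mul_comm (qPoch q q k),
    mul_div_mul_left _ _ (qPoch_ne_zero_s3 hq hq.le j)]

theorem tendsto_qBinom_atTop (hq : ‖q‖ < 1) (k : ℤ) :
    Tendsto (fun N : ℤ => qBinom q N k) atTop (𝓝 (invPoch q q k)) := by
  rcases lt_or_ge k 0 with hk | hk
  · rw [invPoch, if_neg hk.not_ge]
    exact tendsto_const_nhds.congr fun N => (show qBinom q N k = 0 from if_neg (by omega)).symm
  lift k to ℕ using hk
  have hshift : Tendsto (fun N : ℤ => (N - k).toNat) atTop atTop :=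
    tendsto_atTop_atTop.2 fun j => ⟨j + k, fun N hN => by omega⟩
  rw [invPoch, if_pos (Nat.cast_nonneg k), Int.toNat_natCast]
  refine ((tendsto_qBinom_natCast_add hq k).comp hshift).congr' ?_
  filter_upwards [eventually_ge_atTop (k : ℤ)] with N hN
  rw [Function.comp_apply, Nat.cast_add, Int.toNat_of_nonneg (by omega), add_sub_cancel]

end QBinomial

lemma tendsto_atTop_of_le_two_mul_add {f : ℕ → ℤ} (C : ℤ) (hf : ∀ L : ℕ, (L : ℤ) ≤ 2 * f L + C) :
    Tendsto f atTop atTop :=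
  tendsto_atTop_atTop.2 fun B => ⟨(2 * B + C).toNat, fun L hL => by have := hf L; omega⟩

lemma Twar_eq_sum (z q : ℂ) (L : ℤ) (M : ℕ) (a b : ℤ) :
    Twar z q L M a b = ∑ n ∈ range (M + 1), if (L - a - n) % 2 = 0 then
      z ^ (n ^ 2) * qBinom q M n * qBinom q (M + b + (L - a - n) / 2) (M + b) *
        qBinom q (M - b + (L + a - n) / 2) (M - b)
    else 0 :=
  tsum_eq_sum fun n hn => by
    rw [qBinom_eq_zero_of_lt (by simp at hn; omega : (M : ℤ) < n)]
    simp

theorem tendsto_Twar_summand {q : ℂ} (hq : ‖q‖ < 1) (c : ℂ) (m a b : ℤ) (n σ : ℕ) :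
    Tendsto (fun L : ℕ => if ((L : ℤ) - a - n) % 2 = 0 then
        c * qBinom q (m + b + ((L : ℤ) - a - n) / 2) (m + b) *
          qBinom q (m - b + ((L : ℤ) + a - n) / 2) (m - b)
      else 0)
      (atTop ⊓ 𝓟 {L : ℕ | ((L : ℤ) - a) % 2 = σ})
      (𝓝 ((if n % 2 = σ then c else 0) * (invPoch q q (m + b) * invPoch q q (m - b)))) := by
  have hparity : ∀ L : ℕ, ((L : ℤ) - a) % 2 = σ → (((L : ℤ) - a - n) % 2 = 0 ↔ n % 2 = σ) :=
    fun L hL => by omega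
  by_cases hn : n % 2 = σ
  · have h₁ := (tendsto_qBinom_atTop hq (m + b)).comp
      (tendsto_atTop_of_le_two_mul_add (f := fun L : ℕ => m + b + ((L : ℤ) - a - n) / 2)
        (a + n - 2 * (m + b) + 1) fun L => by omega)
    have h₂ := (tendsto_qBinom_atTop hq (m - b)).comp
      (tendsto_atTop_of_le_two_mul_add (f := fun L : ℕ => m - b + ((L : ℤ) + a - n) / 2)
        (n - a - 2 * (m - b) + 1) fun L => by omega)
    rw [if_pos hn, ← mul_assoc]
    refine ((h₁.const_mul c).mul h₂ |>.mono_left inf_le_left).congr' ?_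
    refine eventually_inf_principal.2 (Eventually.of_forall fun L hL => ?_)
    exact (if_pos ((hparity L hL).2 hn)).symm
  · rw [if_neg hn, zero_mul]
    refine tendsto_const_nhds.congr' (eventually_inf_principal.2 (Eventually.of_forall ?_))
    exact fun L hL => (if_neg (mt (hparity L hL).1 hn)).symm

theorem statement_3_general (q z : ℂ) (h1 : ‖q‖ < 1)
    (hz : z ^ 2 = q) (M : ℕ) (a b : ℤ) (σ : ℕ) (hσ : σ = 0 ∨ σ = 1) :
    Filter.Tendsto (fun L : ℕ => Twar z q (L : ℤ) (M : ℤ) a b)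
      (Filter.atTop ⊓ Filter.principal {L : ℕ | ((L : ℤ) - a) % 2 = (σ : ℤ)})
      (nhds ((qPoch (-z) q M + (-1) ^ σ * qPoch z q M) / (2 * qPoch q q (2 * M)) *
        qBinom q (2 * (M : ℤ)) ((M : ℤ) - b))) := by
  have hlim := tendsto_finsetSum (range (M + 1)) fun n _ =>
    tendsto_Twar_summand h1 (z ^ (n ^ 2) * qBinom q M n) M a b n σ
  simp only [← Twar_eq_sum, ← sum_mul, sum_parity_qBinom h1 hz hσ] at hlim
  convert hlim using 2
  rw [qBinom_eq_mul_invPoch, show (2 * (M : ℤ)).toNat = 2 * M by omega,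
    show 2 * (M : ℤ) - (M - b) = M + b by ring]
  field_simp [qPoch_ne_zero_s3 h1 h1.le (2 * M)]

theorem statement_3 (q z : ℂ) (h0 : 0 < ‖q‖) (h1 : ‖q‖ < 1)
    (hz : z ^ 2 = q) (M : ℕ) (a b : ℤ) (σ : ℕ) (hσ : σ = 0 ∨ σ = 1) :
    Filter.Tendsto (fun L : ℕ => Twar z q (L : ℤ) (M : ℤ) a b)
      (Filter.atTop ⊓ Filter.principal {L : ℕ | ((L : ℤ) - a) % 2 = (σ : ℤ)})
      (nhds ((qPoch (-z) q M + (-1) ^ σ * qPoch z q M) / (2 * qPoch q q (2 * M)) *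
        qBinom q (2 * (M : ℤ)) ((M : ℤ) - b))) :=
  statement_3_general q z h1 hz M a b σ hσ
end
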